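/- arXiv:2603.20408 — 6 statements merged into one kernel-verified Lean document; each statement's English description precedes it below -/
import Mathlib

section
/- Let κ ≥ 0, let m ≥ 1 be an integer, and let I_1, …, I_m ∈ {0,1} be indicators with prior-observation counts N_i = ∑_{j=1}^{i−1} I_j. Then ∑_{i=1}^m \bar w_κ(N_i) · I_i ≤ B_m(κ) · 𝟙{∑_{j=1}^m I_j > 0}. -/
/-- `w̄_κ(n)`: the meta-weight, `0` when `κ = 0` and `κ/(n+κ)` when `κ > 0`. -/
noncomputable def wbar (κ : ℝ) (n : ℕ) : ℝ := if κ = 0 then 0 else κ / (n + κ)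

/-- `B_m(κ)`: `0` when `κ = 0` and `1 + κ ln(1 + m/κ)` when `κ > 0`. -/
noncomputable def Bm (m : ℕ) (κ : ℝ) : ℝ := if κ = 0 then 0 else 1 + κ * Real.log (1 + m / κ)

lemma key_eq (κ : ℝ) (hκ : κ ≠ 0) (m : ℕ) (I : ℕ → ℕ)
    (hI : ∀ i, i < m → I i = 0 ∨ I i = 1) (k : ℕ) (hk : k ≤ m) :
    ∑ i ∈ Finset.range k, wbar κ (∑ j ∈ Finset.range i, I j) * (I i : ℝ)
      = ∑ n ∈ Finset.range (∑ j ∈ Finset.range k, I j), κ / (n + κ) := by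
  induction k with
  | zero => simp
  | succ k ih =>
    rw [Finset.sum_range_succ, ih (le_of_lt (Nat.lt_of_succ_le hk)),
      Finset.sum_range_succ (f := I)]
    rcases hI k (Nat.lt_of_succ_le hk) with h | h
    · simp [h]
    · rw [h, Finset.sum_range_succ, wbar, if_neg hκ]
      push_cast
      ring

/-- with prior-observation counts `N_i = ∑_{j<i} I_j`, we have
`∑_{i=1}^m w̄_κ(N_i) I_i ≤ B_m(κ) 𝟙{∑ I_j > 0}`. -/
theorem stmt0 (κ : ℝ) (hκ : 0 ≤ κ) (m : ℕ) (hm : 1 ≤ m)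
    (I : ℕ → ℕ) (hI : ∀ i, i < m → I i = 0 ∨ I i = 1) :
    ∑ i ∈ Finset.range m, wbar κ (∑ j ∈ Finset.range i, I j) * (I i : ℝ)
      ≤ Bm m κ * (if 0 < ∑ j ∈ Finset.range m, I j then 1 else 0) := by
  rcases eq_or_lt_of_le hκ with h0 | hκpos
  · simp [wbar, Bm, ← h0]
  have hκne : κ ≠ 0 := ne_of_gt hκpos
  by_cases hpos : 0 < ∑ j ∈ Finset.range m, I j
  swap
  · have hz : ∀ i ∈ Finset.range m, I i = 0 := by
      intro i hi
      exact (Finset.sum_eq_zero_iff.mp (Nat.eq_zero_of_not_pos hpos)) i hi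
    rw [if_neg hpos, mul_zero]
    apply le_of_eq
    apply Finset.sum_eq_zero
    intro i hi
    rw [hz i hi]; simp
  rw [if_pos hpos, mul_one, key_eq κ hκne m I hI m le_rfl]
  set S := ∑ j ∈ Finset.range m, I j with hS
  have hSm : S ≤ m := by
    calc S ≤ ∑ j ∈ Finset.range m, 1 := by
            apply Finset.sum_le_sum
            intro i hi
            rcases hI i (Finset.mem_range.mp hi) with h | h <;> simp [h]
      _ = m := by simp
  obtain ⟨t, ht⟩ : ∃ t, S = t + 1 := ⟨S - 1, (Nat.succ_pred_eq_of_pos hpos).symm⟩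
  rw [ht, Finset.sum_range_succ']
  have h1 : κ / ((0 : ℕ) + κ) = 1 := by
    simp [div_self hκne]
  rw [h1]
  have hstep : ∀ n : ℕ, κ / ((n + 1 : ℕ) + κ) ≤
      κ * Real.log ((n + 1 : ℕ) + κ) - κ * Real.log (n + κ) := by
    intro n
    have ha : (0:ℝ) < n + κ := by positivity
    have hb : (0:ℝ) < (n + 1 : ℕ) + κ := by positivity
    have hlog := Real.log_le_sub_one_of_pos (x := (n + κ) / ((n + 1 : ℕ) + κ)) (by positivity)
    rw [Real.log_div (ne_of_gt ha) (ne_of_gt hb)] at hlog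
    have h2 : 1 - (n + κ) / ((n + 1 : ℕ) + κ) ≤ Real.log ((n + 1 : ℕ) + κ) - Real.log (n + κ) := by
      linarith
    have h3 : 1 - (n + κ) / ((n + 1 : ℕ) + κ) = 1 / ((n + 1 : ℕ) + κ) := by
      field_simp
      push_cast; ring
    rw [h3] at h2
    calc κ / ((n + 1 : ℕ) + κ) = κ * (1 / ((n + 1 : ℕ) + κ)) := by ring
      _ ≤ κ * (Real.log ((n + 1 : ℕ) + κ) - Real.log (n + κ)) :=
          mul_le_mul_of_nonneg_left h2 hκ
      _ = κ * Real.log ((n + 1 : ℕ) + κ) - κ * Real.log (n + κ) := by ring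
  have hsum : ∑ n ∈ Finset.range t, κ / ((n + 1 : ℕ) + κ)
      ≤ κ * Real.log ((t : ℝ) + κ) - κ * Real.log ((0 : ℕ) + κ) := by
    calc ∑ n ∈ Finset.range t, κ / ((n + 1 : ℕ) + κ)
        ≤ ∑ n ∈ Finset.range t, (κ * Real.log ((n + 1 : ℕ) + κ) - κ * Real.log ((n : ℕ) + κ)) :=
          Finset.sum_le_sum (fun n _ => hstep n)
      _ = κ * Real.log ((t : ℕ) + κ) - κ * Real.log ((0 : ℕ) + κ) :=
          Finset.sum_range_sub (fun n : ℕ => κ * Real.log ((n : ℝ) + κ)) t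
      _ = κ * Real.log ((t : ℝ) + κ) - κ * Real.log ((0 : ℕ) + κ) := by norm_num
  have htm : (t : ℝ) ≤ m := by
    have : t + 1 ≤ m := ht ▸ hSm
    exact_mod_cast Nat.le_of_succ_le this
  have hmono : Real.log ((t : ℝ) + κ) ≤ Real.log ((m : ℝ) + κ) :=
    Real.log_le_log (by positivity) (by linarith)
  have hfin : κ * Real.log ((m : ℝ) + κ) - κ * Real.log κ = κ * Real.log (1 + m / κ) := by
    rw [← mul_sub, ← Real.log_div (by positivity) hκne]
    congr 1
    field_simp
    ring
  rw [Bm, if_neg hκne]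
  have h0 : Real.log ((0 : ℕ) + κ) = Real.log κ := by norm_num
  rw [h0] at hsum
  nlinarith [hsum, mul_le_mul_of_nonneg_left hmono hκ]
end

section
/- Let κ ≥ 0, β > 0, and let m, T ≥ 1 be integers. Let I_i^t ∈ {0,1} for t ∈ [T] and i ∈ [m] be a double array of indicators; set N_i^t = ∑_{j=1}^{i−1} I_j^t, let I_t = 𝟙{∑_{j=1}^m I_j^t > 0} be the task indicator, and set M_t = ∑_{τ=1}^{t} I_τ with M_0 = 0. Then (1/T) · ∑_{t=1}^T ∑_{i=1}^m \bar w_κ(N_i^t) · I_i^t · √(β / max{M_{t−1}, 1}) ≤ 2 · B_m(κ) · √(β/T). -/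
open Finset

noncomputable def hfun (κ : ℝ) : ℕ → ℝ
  | 0 => 0
  | (n+1) => 1 + κ * Real.log (((n : ℝ) + κ) / κ)

lemma hfun_step (κ : ℝ) (hκ : 0 < κ) (n : ℕ) :
    κ / ((n : ℝ) + κ) ≤ hfun κ (n + 1) - hfun κ n := by
  cases n with
  | zero =>
    simp [hfun, div_self hκ.ne']
  | succ k =>
    have h1 : (0:ℝ) < (k : ℝ) + κ := by positivity
    have h2 : (0:ℝ) < (k : ℝ) + 1 + κ := by positivity
    have hx : (0:ℝ) < ((k : ℝ) + κ) / ((k : ℝ) + 1 + κ) := by positivity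
    have hlog := Real.log_le_sub_one_of_pos hx
    rw [Real.log_div h1.ne' h2.ne'] at hlog
    have e : ((k : ℝ) + κ) / ((k : ℝ) + 1 + κ) - 1 = -(1 / ((k:ℝ) + 1 + κ)) := by
      field_simp
      ring
    rw [e] at hlog
    have key : 1 / ((k:ℝ) + 1 + κ) ≤ Real.log ((k:ℝ) + 1 + κ) - Real.log ((k:ℝ) + κ) := by
      linarith
    have hmain : κ / ((k:ℝ) + 1 + κ)
        ≤ (1 + κ * Real.log (((k:ℝ) + 1 + κ) / κ)) - (1 + κ * Real.log (((k:ℝ) + κ) / κ)) := by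
      calc κ / ((k:ℝ) + 1 + κ) = κ * (1 / ((k:ℝ) + 1 + κ)) := by ring
        _ ≤ κ * (Real.log ((k:ℝ) + 1 + κ) - Real.log ((k:ℝ) + κ)) :=
            mul_le_mul_of_nonneg_left key hκ.le
        _ = (1 + κ * Real.log (((k:ℝ) + 1 + κ) / κ)) - (1 + κ * Real.log (((k:ℝ) + κ) / κ)) := by
            rw [Real.log_div h2.ne' hκ.ne', Real.log_div h1.ne' hκ.ne']; ring
    simp only [hfun]
    push_cast
    linarith

lemma hfun_le_Bm (κ : ℝ) (hκ : 0 < κ) (m n : ℕ) (hn : n ≤ m) :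
    hfun κ n ≤ Bm m κ := by
  have hBm : Bm m κ = 1 + κ * Real.log (1 + (m:ℝ) / κ) := by
    simp [Bm, hκ.ne']
  have hmdiv : (0:ℝ) ≤ (m:ℝ) / κ := div_nonneg (Nat.cast_nonneg m) hκ.le
  have hlog0 : 0 ≤ Real.log (1 + (m:ℝ) / κ) := Real.log_nonneg (by linarith)
  cases n with
  | zero =>
    simp only [hfun, hBm]
    nlinarith [mul_nonneg hκ.le hlog0]
  | succ k =>
    simp only [hfun, hBm]
    have h1 : (0:ℝ) < ((k : ℝ) + κ) / κ := by positivity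
    have hkm : (k : ℝ) ≤ (m : ℝ) := by
      exact_mod_cast Nat.le_of_succ_le hn
    have heq : 1 + (m:ℝ)/κ = ((m:ℝ) + κ)/κ := by field_simp; ring
    rw [heq]
    have hle : Real.log (((k:ℝ) + κ)/κ) ≤ Real.log (((m:ℝ) + κ)/κ) := by
      apply Real.log_le_log h1
      gcongr
    nlinarith [mul_le_mul_of_nonneg_left hle hκ.le]

lemma innerSum_le (κ : ℝ) (hκ : 0 < κ) (m : ℕ) (f : ℕ → ℕ) (hf : ∀ i, i < m → f i ≤ 1) :
    ∑ i ∈ range m, wbar κ (∑ j ∈ range i, f j) * (f i : ℝ)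
      ≤ ((if 0 < ∑ j ∈ range m, f j then 1 else 0 : ℕ) : ℝ) * Bm m κ := by
  by_cases hz : ∑ j ∈ range m, f j = 0
  · have hterm : ∀ i ∈ range m, wbar κ (∑ j ∈ range i, f j) * (f i : ℝ) = 0 := by
      intro i hi
      have : f i = 0 := (Finset.sum_eq_zero_iff).mp hz i hi
      simp [this]
    rw [Finset.sum_eq_zero hterm, hz]
    norm_num
  · have hpos : 0 < ∑ j ∈ range m, f j := Nat.pos_of_ne_zero hz
    rw [if_pos hpos]
    push_cast
    rw [one_mul]
    have step : ∀ i ∈ range m,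
        wbar κ (∑ j ∈ range i, f j) * (f i : ℝ)
          ≤ hfun κ (∑ j ∈ range (i+1), f j) - hfun κ (∑ j ∈ range i, f j) := by
      intro i hi
      have hfi := hf i (mem_range.mp hi)
      rcases Nat.le_one_iff_eq_zero_or_eq_one.mp hfi with h | h
      · simp [Finset.sum_range_succ, h]
      · rw [Finset.sum_range_succ, h]
        simp only [Nat.cast_one, mul_one]
        rw [wbar, if_neg hκ.ne']
        exact hfun_step κ hκ _
    calc ∑ i ∈ range m, wbar κ (∑ j ∈ range i, f j) * (f i : ℝ)
        ≤ ∑ i ∈ range m, (hfun κ (∑ j ∈ range (i+1), f j) - hfun κ (∑ j ∈ range i, f j)) :=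
          Finset.sum_le_sum step
      _ = hfun κ (∑ j ∈ range m, f j) - hfun κ (∑ j ∈ range 0, f j) :=
          Finset.sum_range_sub (fun i => hfun κ (∑ j ∈ range i, f j)) m
      _ = hfun κ (∑ j ∈ range m, f j) := by simp [hfun]
      _ ≤ Bm m κ := by
          apply hfun_le_Bm κ hκ
          calc ∑ j ∈ range m, f j ≤ ∑ j ∈ range m, 1 :=
                Finset.sum_le_sum (fun i hi => hf i (mem_range.mp hi))
            _ = m := by simp

noncomputable def Gfun : ℕ → ℝ
  | 0 => 0
  | 1 => 1
  | (n+2) => 2 * Real.sqrt ((n : ℝ) + 1)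

lemma Gfun_le (n : ℕ) : Gfun n ≤ 2 * Real.sqrt (n : ℝ) := by
  match n with
  | 0 => simp [Gfun]
  | 1 =>
    simp only [Gfun, Nat.cast_one, Real.sqrt_one]
    norm_num
  | (n+2) =>
    simp only [Gfun]
    have h : ((n:ℝ) + 1) ≤ ((n + 2 : ℕ) : ℝ) := by push_cast; linarith
    have := Real.sqrt_le_sqrt h
    linarith

lemma Gfun_step (s c : ℕ) (hc : c ≤ 1) :
    (c : ℝ) / Real.sqrt ((max s 1 : ℕ) : ℝ) ≤ Gfun (s + c) - Gfun s := by
  rcases Nat.le_one_iff_eq_zero_or_eq_one.mp hc with h | h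
  · simp [h]
  subst h
  match s with
  | 0 => simp [Gfun]
  | 1 =>
    simp only [Gfun]
    norm_num
  | (k+2) =>
    have hmax : max (k+2) 1 = k + 2 := by omega
    rw [hmax]
    have g1 : Gfun (k + 2 + 1) = 2 * Real.sqrt ((k:ℝ) + 2) := by
      show Gfun ((k+1) + 2) = _
      simp only [Gfun]
      congr 1
      push_cast
      ring
    have g2 : Gfun (k + 2) = 2 * Real.sqrt ((k:ℝ) + 1) := by
      simp only [Gfun]
    rw [g1, g2]
    have hcast : ((k + 2 : ℕ) : ℝ) = (k:ℝ) + 2 := by push_cast; ring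
    rw [hcast]
    set a := Real.sqrt ((k:ℝ) + 2) with hadef
    set b := Real.sqrt ((k:ℝ) + 1) with hbdef
    have ha : 0 < a := Real.sqrt_pos.mpr (by positivity)
    have ha2 : a ^ 2 = (k : ℝ) + 2 := Real.sq_sqrt (by positivity)
    have hb2 : b ^ 2 = (k : ℝ) + 1 := Real.sq_sqrt (by positivity)
    have hb0 : 0 ≤ b := Real.sqrt_nonneg _
    rw [Nat.cast_one, div_le_iff₀ ha]
    nlinarith [sq_nonneg (a - b)]

lemma outerSum_le (T : ℕ) (c : ℕ → ℕ) (hc : ∀ t, t < T → c t ≤ 1) :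
    ∑ t ∈ range T, (c t : ℝ) / Real.sqrt ((max (∑ τ ∈ range t, c τ) 1 : ℕ) : ℝ)
      ≤ 2 * Real.sqrt (T : ℝ) := by
  have step : ∀ t ∈ range T,
      (c t : ℝ) / Real.sqrt ((max (∑ τ ∈ range t, c τ) 1 : ℕ) : ℝ)
        ≤ Gfun (∑ τ ∈ range (t+1), c τ) - Gfun (∑ τ ∈ range t, c τ) := by
    intro t ht
    rw [Finset.sum_range_succ]
    exact Gfun_step _ _ (hc t (mem_range.mp ht))
  calc ∑ t ∈ range T, (c t : ℝ) / Real.sqrt ((max (∑ τ ∈ range t, c τ) 1 : ℕ) : ℝ)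
      ≤ ∑ t ∈ range T, (Gfun (∑ τ ∈ range (t+1), c τ) - Gfun (∑ τ ∈ range t, c τ)) :=
        Finset.sum_le_sum step
    _ = Gfun (∑ τ ∈ range T, c τ) - Gfun (∑ τ ∈ range 0, c τ) :=
        Finset.sum_range_sub (fun t => Gfun (∑ τ ∈ range t, c τ)) T
    _ = Gfun (∑ τ ∈ range T, c τ) := by simp [Gfun]
    _ ≤ 2 * Real.sqrt ((∑ τ ∈ range T, c τ : ℕ) : ℝ) := Gfun_le _
    _ ≤ 2 * Real.sqrt (T : ℝ) := by
        apply mul_le_mul_of_nonneg_left _ (by norm_num)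
        apply Real.sqrt_le_sqrt
        have : ∑ τ ∈ range T, c τ ≤ T := by
          calc ∑ τ ∈ range T, c τ ≤ ∑ τ ∈ range T, 1 :=
                Finset.sum_le_sum (fun t ht => hc t (mem_range.mp ht))
            _ = T := by simp
        exact_mod_cast this

/-- with within-task counts `N_i^t = ∑_{j<i} I_j^t`, task indicators
`I_t = 𝟙{∑_j I_j^t > 0}` and cumulative active-task counts `M_t = ∑_{τ≤t} I_τ`,
`(1/T) ∑_t ∑_i w̄_κ(N_i^t) I_i^t √(β / max{M_{t-1},1}) ≤ 2 B_m(κ) √(β/T)`. -/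
theorem stmt2 (κ β : ℝ) (hκ : 0 ≤ κ) (hβ : 0 < β) (m T : ℕ) (hm : 1 ≤ m) (hT : 1 ≤ T)
    (I : ℕ → ℕ → ℕ) (hI : ∀ t i, t < T → i < m → I t i = 0 ∨ I t i = 1) :
    (1 / T : ℝ) * ∑ t ∈ Finset.range T, ∑ i ∈ Finset.range m,
        wbar κ (∑ j ∈ Finset.range i, I t j) * (I t i : ℝ) *
          Real.sqrt (β /
            ((max (∑ τ ∈ Finset.range t,
              (if 0 < ∑ j ∈ Finset.range m, I τ j then 1 else 0)) 1 : ℕ) : ℝ))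
      ≤ 2 * Bm m κ * Real.sqrt (β / T) := by
  by_cases hκ0 : κ = 0
  · simp [wbar, Bm, hκ0]
  have hκpos : 0 < κ := lt_of_le_of_ne hκ (Ne.symm hκ0)
  have hTpos : (0:ℝ) < T := by exact_mod_cast hT
  have hsT : 0 < Real.sqrt (T:ℝ) := Real.sqrt_pos.mpr hTpos
  have hBm0 : 0 ≤ Bm m κ := by
    have := hfun_le_Bm κ hκpos m 0 (Nat.zero_le m)
    simpa [hfun] using this
  set c : ℕ → ℕ := fun τ => if 0 < ∑ j ∈ Finset.range m, I τ j then 1 else 0 with hc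
  have hc1 : ∀ t, t < T → c t ≤ 1 := by
    intro t ht; simp only [hc]; split <;> norm_num
  set D : ℕ → ℝ := fun t => ((max (∑ τ ∈ Finset.range t, c τ) 1 : ℕ) : ℝ) with hD
  have hsum : ∑ t ∈ Finset.range T, ∑ i ∈ Finset.range m,
        wbar κ (∑ j ∈ Finset.range i, I t j) * (I t i : ℝ) * Real.sqrt (β / D t)
      ≤ Bm m κ * Real.sqrt β * (2 * Real.sqrt (T:ℝ)) := by
    calc ∑ t ∈ Finset.range T, ∑ i ∈ Finset.range m,
          wbar κ (∑ j ∈ Finset.range i, I t j) * (I t i : ℝ) * Real.sqrt (β / D t)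
        = ∑ t ∈ Finset.range T,
            (∑ i ∈ Finset.range m, wbar κ (∑ j ∈ Finset.range i, I t j) * (I t i : ℝ))
              * Real.sqrt (β / D t) := by
          refine Finset.sum_congr rfl (fun t ht => ?_)
          rw [Finset.sum_mul]
      _ ≤ ∑ t ∈ Finset.range T, ((c t : ℝ) * Bm m κ) * Real.sqrt (β / D t) := by
          apply Finset.sum_le_sum
          intro t ht
          apply mul_le_mul_of_nonneg_right _ (Real.sqrt_nonneg _)
          exact innerSum_le κ hκpos m (I t) (fun i hi => by
            rcases hI t i (Finset.mem_range.mp ht) hi with h | h <;> omega)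
      _ = Bm m κ * Real.sqrt β *
            ∑ t ∈ Finset.range T, (c t : ℝ) / Real.sqrt (D t) := by
          rw [Finset.mul_sum]
          refine Finset.sum_congr rfl (fun t ht => ?_)
          rw [Real.sqrt_div hβ.le]
          ring
      _ ≤ Bm m κ * Real.sqrt β * (2 * Real.sqrt (T:ℝ)) := by
          apply mul_le_mul_of_nonneg_left _ (by positivity)
          exact outerSum_le T c hc1
  have hTT : Real.sqrt (T:ℝ) * Real.sqrt (T:ℝ) = (T:ℝ) := Real.mul_self_sqrt hTpos.le
  have h2 : Real.sqrt (T:ℝ) / (T:ℝ) = 1 / Real.sqrt (T:ℝ) := by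
    rw [div_eq_div_iff hTpos.ne' hsT.ne', hTT, one_mul]
  have final : (1 / T : ℝ) * (Bm m κ * Real.sqrt β * (2 * Real.sqrt (T:ℝ)))
      = 2 * Bm m κ * Real.sqrt (β / T) := by
    rw [Real.sqrt_div hβ.le]
    calc (1 / T : ℝ) * (Bm m κ * Real.sqrt β * (2 * Real.sqrt (T:ℝ)))
        = 2 * Bm m κ * Real.sqrt β * (Real.sqrt (T:ℝ) / (T:ℝ)) := by ring
      _ = 2 * Bm m κ * Real.sqrt β * (1 / Real.sqrt (T:ℝ)) := by rw [h2]
      _ = 2 * Bm m κ * (Real.sqrt β / Real.sqrt (T:ℝ)) := by ring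
  calc (1 / T : ℝ) * ∑ t ∈ Finset.range T, ∑ i ∈ Finset.range m,
        wbar κ (∑ j ∈ Finset.range i, I t j) * (I t i : ℝ) * Real.sqrt (β / D t)
      ≤ (1 / T : ℝ) * (Bm m κ * Real.sqrt β * (2 * Real.sqrt (T:ℝ))) := by
        apply mul_le_mul_of_nonneg_left hsum (by positivity)
    _ = 2 * Bm m κ * Real.sqrt (β / T) := final
end

section
/- Let κ ≥ 0, Ψ ≥ 0, and let m, T ≥ 1 be integers. Let I_i^t ∈ {0,1} for t ∈ [T] and i ∈ [m] be a double array of indicators; set N_i^t = ∑_{j=1}^{i−1} I_j^t, let I_t = 𝟙{∑_{j=1}^m I_j^t > 0} be the task indicator, and set M_T = ∑_{τ=1}^{T} I_τ. Then (1/T) · ∑_{t=1}^T ∑_{i=1}^m \bar w_κ(N_i^t) · I_i^t · Ψ ≤ B_m(κ) · Ψ · M_T / T ≤ B_m(κ) · Ψ. -/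
lemma key (κ : ℝ) (hκ : κ ≠ 0) (m : ℕ) (f : ℕ → ℕ) (hf : ∀ i, i < m → f i = 0 ∨ f i = 1) :
    ∑ i ∈ Finset.range m, wbar κ (∑ j ∈ Finset.range i, f j) * (f i : ℝ)
      = ∑ n ∈ Finset.range (∑ j ∈ Finset.range m, f j), κ / (n + κ) := by
  induction m with
  | zero => simp
  | succ m ih =>
    rw [Finset.sum_range_succ, ih (fun i hi => hf i (hi.trans (Nat.lt_succ_self m))),
      Finset.sum_range_succ (f := fun j => f j)]
    rcases hf m (Nat.lt_succ_self m) with h | h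
    · simp [h]
    · rw [h, Finset.sum_range_succ]
      simp [wbar, hκ]

lemma tele (κ : ℝ) (hκ : 0 < κ) (K : ℕ) :
    ∑ n ∈ Finset.range K, κ / (n + 1 + κ) ≤ κ * (Real.log (K + κ) - Real.log κ) := by
  induction K with
  | zero => simp
  | succ K ih =>
    rw [Finset.sum_range_succ]
    have hx : (0:ℝ) < K + κ := by positivity
    have hx2 : (0:ℝ) < (K:ℝ) + 1 + κ := by positivity
    have hlog : Real.log ((K + κ) / ((K:ℝ) + 1 + κ)) ≤ (K + κ) / ((K:ℝ) + 1 + κ) - 1 :=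
      Real.log_le_sub_one_of_pos (by positivity)
    rw [Real.log_div hx.ne' hx2.ne'] at hlog
    have hstep : κ / ((K:ℝ) + 1 + κ) ≤ κ * (Real.log ((K:ℝ) + 1 + κ) - Real.log (K + κ)) := by
      have h1 : 1 / ((K:ℝ) + 1 + κ) ≤ Real.log ((K:ℝ) + 1 + κ) - Real.log (K + κ) := by
        have : (K + κ) / ((K:ℝ) + 1 + κ) - 1 = -(1 / ((K:ℝ) + 1 + κ)) := by
          field_simp
          ring
        linarith [hlog, this ▸ hlog]
      calc κ / ((K:ℝ) + 1 + κ) = κ * (1 / ((K:ℝ) + 1 + κ)) := by ring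
        _ ≤ κ * (Real.log ((K:ℝ) + 1 + κ) - Real.log (K + κ)) :=
          mul_le_mul_of_nonneg_left h1 hκ.le
    push_cast
    nlinarith [ih]

lemma inner_bound (κ : ℝ) (hκ : 0 < κ) (m K : ℕ) (hK : K ≤ m) (hK1 : 1 ≤ K) :
    ∑ n ∈ Finset.range K, κ / (n + κ) ≤ 1 + κ * Real.log (1 + m / κ) := by
  obtain ⟨K', rfl⟩ : ∃ K', K = K' + 1 := ⟨K - 1, (Nat.succ_pred_eq_of_pos hK1).symm⟩
  rw [Finset.sum_range_succ']
  have h0 : κ / ((0:ℕ) + κ) = 1 := by simp [hκ.ne']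
  rw [h0]
  have h1 : ∑ n ∈ Finset.range K', κ / (↑(n + 1) + κ) ≤ κ * (Real.log (K' + κ) - Real.log κ) := by
    have := tele κ hκ K'
    convert this using 2 with n
    push_cast; ring
  have h2 : Real.log ((K':ℝ) + κ) ≤ Real.log ((m:ℝ) + κ) := by
    apply Real.log_le_log (by positivity)
    have : (K':ℝ) ≤ m := by exact_mod_cast Nat.le_of_succ_le hK
    linarith
  have h3 : κ * (Real.log ((m:ℝ) + κ) - Real.log κ) = κ * Real.log (1 + m / κ) := by
    rw [← Real.log_div (by positivity) hκ.ne']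
    congr 2
    field_simp
    ring
  nlinarith [h1, h2]

/-- with within-task counts `N_i^t = ∑_{j<i} I_j^t`, task indicators
`I_t = 𝟙{∑_j I_j^t > 0}` and total active-task count `M_T = ∑_{τ≤T} I_τ`,
`(1/T) ∑_t ∑_i w̄_κ(N_i^t) I_i^t Ψ ≤ B_m(κ) Ψ M_T / T ≤ B_m(κ) Ψ`. -/
theorem stmt3 (κ Ψ : ℝ) (hκ : 0 ≤ κ) (hΨ : 0 ≤ Ψ) (m T : ℕ) (hm : 1 ≤ m) (hT : 1 ≤ T)
    (I : ℕ → ℕ → ℕ) (hI : ∀ t i, t < T → i < m → I t i = 0 ∨ I t i = 1) :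
    (1 / T : ℝ) * ∑ t ∈ Finset.range T, ∑ i ∈ Finset.range m,
        wbar κ (∑ j ∈ Finset.range i, I t j) * (I t i : ℝ) * Ψ
      ≤ Bm m κ * Ψ *
          ((∑ τ ∈ Finset.range T,
            (if 0 < ∑ j ∈ Finset.range m, I τ j then 1 else 0) : ℕ) : ℝ) / T ∧
    Bm m κ * Ψ *
        ((∑ τ ∈ Finset.range T,
          (if 0 < ∑ j ∈ Finset.range m, I τ j then 1 else 0) : ℕ) : ℝ) / T
      ≤ Bm m κ * Ψ := by
  have hT0 : (0:ℝ) < T := by exact_mod_cast hT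
  set M : ℕ := ∑ τ ∈ Finset.range T, (if 0 < ∑ j ∈ Finset.range m, I τ j then 1 else 0) with hM
  have hMT : M ≤ T := by
    rw [hM]
    calc _ ≤ ∑ τ ∈ Finset.range T, 1 := Finset.sum_le_sum (by intro i _; split <;> simp)
      _ = T := by simp
  have hBm : 0 ≤ Bm m κ := by
    unfold Bm
    split
    · exact le_refl 0
    · have hκ' : 0 < κ := lt_of_le_of_ne hκ (Ne.symm (by assumption))
      have hmk : (0:ℝ) ≤ m / κ := by positivity
      have : (0:ℝ) ≤ Real.log (1 + m / κ) := Real.log_nonneg (by linarith)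
      nlinarith
  rcases eq_or_lt_of_le hκ with rfl | hκpos
  · constructor <;> simp [wbar, Bm, hM]
  · have hA : ∀ t ∈ Finset.range T,
        ∑ i ∈ Finset.range m, wbar κ (∑ j ∈ Finset.range i, I t j) * (I t i : ℝ) * Ψ
          ≤ Bm m κ * Ψ * ((if 0 < ∑ j ∈ Finset.range m, I t j then (1:ℕ) else 0) : ℝ) := by
      intro t ht
      rw [Finset.mem_range] at ht
      have hkey := key κ hκpos.ne' m (I t) (fun i hi => hI t i ht hi)
      have hfac : ∑ i ∈ Finset.range m, wbar κ (∑ j ∈ Finset.range i, I t j) * (I t i : ℝ) * Ψ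
          = (∑ i ∈ Finset.range m, wbar κ (∑ j ∈ Finset.range i, I t j) * (I t i : ℝ)) * Ψ := by
        rw [Finset.sum_mul]
      rw [hfac, hkey]
      set K := ∑ j ∈ Finset.range m, I t j with hK
      rcases Nat.eq_zero_or_pos K with h0 | hpos
      · simp [h0, ← hK]
      · have hKm : K ≤ m := by
          rw [hK]
          calc _ ≤ ∑ j ∈ Finset.range m, 1 := by
                apply Finset.sum_le_sum
                intro j hj
                rcases hI t j ht (Finset.mem_range.mp hj) with h | h <;> simp [h]
            _ = m := by simp
        have hib := inner_bound κ hκpos m K hKm hpos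
        have hBmeq : Bm m κ = 1 + κ * Real.log (1 + m / κ) := by
          simp [Bm, hκpos.ne']
        rw [if_pos hpos]
        push_cast
        rw [mul_one, hBmeq]
        exact mul_le_mul_of_nonneg_right hib hΨ
    have hsum : ∑ t ∈ Finset.range T, ∑ i ∈ Finset.range m,
          wbar κ (∑ j ∈ Finset.range i, I t j) * (I t i : ℝ) * Ψ
        ≤ Bm m κ * Ψ * (M : ℝ) := by
      calc _ ≤ ∑ t ∈ Finset.range T,
            Bm m κ * Ψ * ((if 0 < ∑ j ∈ Finset.range m, I t j then (1:ℕ) else 0) : ℝ) :=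
            Finset.sum_le_sum hA
        _ = Bm m κ * Ψ * (M : ℝ) := by
            rw [← Finset.mul_sum, hM]
            push_cast
            ring
    constructor
    · have h := mul_le_mul_of_nonneg_left hsum (by positivity : (0:ℝ) ≤ (T:ℝ)⁻¹)
      have e2 : Bm m κ * Ψ * (M:ℝ) / (T:ℝ) = (T:ℝ)⁻¹ * (Bm m κ * Ψ * (M:ℝ)) := by
        rw [div_eq_mul_inv]; ring
      rw [one_div, e2]
      exact h
    · rw [div_le_iff₀ hT0]
      have hMT' : (M:ℝ) ≤ T := by exact_mod_cast hMT
      have : 0 ≤ Bm m κ * Ψ := mul_nonneg hBm hΨ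
      nlinarith
end

section
/- Let κ ≥ 0, let m ≥ 1 be an integer, and let I_1, …, I_m ∈ {0,1} be indicators with prior-observation counts N_i = ∑_{j=1}^{i−1} I_j and total count n = ∑_{j=1}^m I_j. If n ≥ 1, then ∑_{i=1}^m w_κ(N_i) · I_i / √(max{1, N_i}) ≤ 2n / (√n + √κ). -/
/-- `w_κ(n)`: the within-task weight, `1` when `κ = 0` and `n/(n+κ)` when `κ > 0`. -/
noncomputable def wgt (κ : ℝ) (n : ℕ) : ℝ := if κ = 0 then 1 else n / (n + κ)

/-- The summand `f(k) = w_κ(k)/√(max 1 k)`. -/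
noncomputable def fterm (κ : ℝ) (k : ℕ) : ℝ :=
  wgt κ k / Real.sqrt ((max 1 k : ℕ) : ℝ)

lemma fterm_eq (κ : ℝ) (hκ : 0 ≤ κ) (k : ℕ) (hk : 1 ≤ k) :
    fterm κ k = Real.sqrt k / ((k : ℝ) + κ) := by
  have hmax : max 1 k = k := max_eq_right hk
  have hk0 : (0:ℝ) < k := by exact_mod_cast hk
  have hsq : Real.sqrt k * Real.sqrt k = k := Real.mul_self_sqrt hk0.le
  have hs0 : 0 < Real.sqrt k := Real.sqrt_pos.mpr hk0
  have hkκ : (0:ℝ) < k + κ := by linarith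
  unfold fterm wgt
  rw [hmax]
  by_cases h : κ = 0
  · rw [if_pos h, h, add_zero, div_eq_div_iff hs0.ne' hk0.ne', one_mul, hsq]
  · rw [if_neg h]
    rw [div_div, div_eq_div_iff (by positivity) hkκ.ne']
    nlinarith [hsq]

/-- Core polynomial inequality, with `a = √n ≥ 1`, `b = √(n+1)`, `c = √κ`. -/
lemma key_poly (a b c : ℝ) (ha : 1 ≤ a) (hb : 0 < b) (hb2 : b^2 = a^2 + 1)
    (hc : 0 ≤ c) :
    (2*a^2*(b^2+c^2) + b*(a+c))*(b+c) ≤ 2*b^2*((a+c)*(b^2+c^2)) := by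
  have ha0 : (0:ℝ) < a := lt_of_lt_of_le one_pos ha
  have h2ab : 2*a*b ≤ 2*a^2 + 1 := by nlinarith [sq_nonneg (a - b)]
  set S : ℝ := c + 2*c^3 + a + 2*a*c^2 + a^2*c + 3*a^3 + 2*a^5 + 2*a^3*c^2 with hS
  set T : ℝ := c^2 + a*c + 2*a^2 + 2*a^2*c^2 + 2*a^4 with hT
  have hT0 : 0 ≤ T := by
    have := mul_nonneg ha0.le hc
    nlinarith [sq_nonneg c, sq_nonneg a]
  have hpos : 0 ≤ a*c + 4*a*c^3 - c^2 := by
    have h1 : 0 ≤ c * (a + 4*a*c^2 - c) := by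
      apply mul_nonneg hc
      nlinarith [sq_nonneg (2*c - 1), mul_nonneg (mul_nonneg hc hc) (sub_nonneg.mpr ha)]
    nlinarith [h1]
  have hSbT : 0 ≤ S - b*T := by
    have hid : 2*a*(S - b*T) = (a*c + 4*a*c^3 - c^2) + (2*a^2 + 1 - 2*a*b)*T := by
      rw [hS, hT]; ring
    have h2 : 0 ≤ (2*a^2 + 1 - 2*a*b)*T := mul_nonneg (by linarith) hT0
    nlinarith [hid, hpos, h2]
  have hmain : 2*b^2*((a+c)*(b^2+c^2)) - (2*a^2*(b^2+c^2) + b*(a+c))*(b+c)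
      = (S - b*T) + (b^2 - a^2 - 1) *
        (c + 2*c^3 + 2*b^2*c + a + 2*a*c^2 + 2*a*b^2 - 2*a^2*b + 2*a^3) := by
    rw [hS, hT]; ring
  have hz : b^2 - a^2 - 1 = 0 := by rw [hb2]; ring
  rw [hz, zero_mul, add_zero] at hmain
  linarith

/-- Step inequality: `g(n) + c(n+1) ≤ g(n+1)` for `n ≥ 1`. -/
lemma gstep (κ : ℝ) (hκ : 0 ≤ κ) (n : ℕ) (hn : 1 ≤ n) :
    2*(n:ℝ)/(Real.sqrt n + Real.sqrt κ) + Real.sqrt ((n:ℝ)+1)/(((n:ℝ)+1) + κ)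
      ≤ 2*((n:ℝ)+1)/(Real.sqrt ((n:ℝ)+1) + Real.sqrt κ) := by
  set a := Real.sqrt n with hadef
  set b := Real.sqrt ((n:ℝ)+1) with hbdef
  set c := Real.sqrt κ with hcdef
  have hn0 : (1:ℝ) ≤ (n:ℝ) := by exact_mod_cast hn
  have ha : 1 ≤ a := by
    rw [hadef, show (1:ℝ) = Real.sqrt 1 by simp]
    exact Real.sqrt_le_sqrt hn0
  have ha2 : a^2 = (n:ℝ) := Real.sq_sqrt (by linarith)
  have hb2 : b^2 = (n:ℝ)+1 := Real.sq_sqrt (by linarith)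
  have hc2 : c^2 = κ := Real.sq_sqrt hκ
  have hb0 : 0 < b := Real.sqrt_pos.mpr (by linarith)
  have hc0 : 0 ≤ c := Real.sqrt_nonneg _
  have ha0 : 0 < a := lt_of_lt_of_le one_pos ha
  have hb2a : b^2 = a^2 + 1 := by rw [hb2, ha2]
  have hac : 0 < a + c := by linarith
  have hbc : 0 < b + c := by linarith
  have hbc2 : 0 < b^2 + c^2 := by positivity
  have key := key_poly a b c ha hb0 hb2a hc0
  rw [← hb2, ← hc2, ← ha2]
  calc 2*a^2/(a + c) + b/(b^2 + c^2)
      = (2*a^2*(b^2+c^2) + b*(a+c))/((a+c)*(b^2+c^2)) := by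
        rw [div_add_div _ _ hac.ne' hbc2.ne']; ring_nf
    _ ≤ 2*b^2/(b+c) := by
        rw [div_le_div_iff₀ (by positivity) hbc]
        nlinarith [key]

/-- Main invariant: `∑_{k<n} f(k) ≤ g(n) - √n/(n+κ)`. -/
lemma Fbound (κ : ℝ) (hκ : 0 ≤ κ) (n : ℕ) (hn : 1 ≤ n) :
    ∑ k ∈ Finset.range n, fterm κ k
      ≤ 2*(n:ℝ)/(Real.sqrt n + Real.sqrt κ) - Real.sqrt n/((n:ℝ)+κ) := by
  induction n with
  | zero => omega
  | succ n ih =>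
    rcases Nat.lt_or_ge n 1 with h1 | h1
    · -- base case : n = 0, so n+1 = 1
      interval_cases n
      have hc2 : Real.sqrt κ ^ 2 = κ := Real.sq_sqrt hκ
      have hc0 : 0 ≤ Real.sqrt κ := Real.sqrt_nonneg _
      have hκ1 : (0:ℝ) < 1 + κ := by linarith
      have hs1 : (0:ℝ) < 1 + Real.sqrt κ := by linarith
      norm_num [Finset.sum_range_one, fterm, wgt]
      by_cases h : κ = 0
      · simp [h]; norm_num
      · rw [if_neg h]
        have hk : (1+κ)⁻¹ ≤ 2/(1+Real.sqrt κ) := by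
          rw [inv_eq_one_div, div_le_div_iff₀ hκ1 hs1]
          nlinarith [sq_nonneg (Real.sqrt κ - 1)]
        linarith
    · have ih' := ih h1
      rw [Finset.sum_range_succ]
      have hf : fterm κ n = Real.sqrt n / ((n:ℝ) + κ) := fterm_eq κ hκ n h1
      have hstep := gstep κ hκ n h1
      push_cast
      push_cast at ih'
      linarith

/-- Reduction: the indicator sum equals the sum of `fterm` over the count range. -/
lemma sum_eq (κ : ℝ) (m : ℕ) (I : ℕ → ℕ) (hI : ∀ i, i < m → I i = 0 ∨ I i = 1) :
    ∑ i ∈ Finset.range m,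
        wgt κ (∑ j ∈ Finset.range i, I j) * (I i : ℝ) /
          Real.sqrt ((max 1 (∑ j ∈ Finset.range i, I j) : ℕ) : ℝ)
      = ∑ k ∈ Finset.range (∑ j ∈ Finset.range m, I j), fterm κ k := by
  induction m with
  | zero => simp
  | succ m ih =>
    have ih' := ih (fun i hi => hI i (hi.trans (Nat.lt_succ_self m)))
    rw [Finset.sum_range_succ, ih', Finset.sum_range_succ (f := I)]
    rcases hI m (Nat.lt_succ_self m) with h | h
    · simp [h]
    · rw [h, Finset.sum_range_succ (f := fterm κ)]
      simp only [Nat.cast_one, mul_one]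
      rfl

/-- with prior-observation counts `N_i = ∑_{j<i} I_j` and total count
`n = ∑_{j} I_j ≥ 1`, we have `∑_i w_κ(N_i) I_i / √(max{1,N_i}) ≤ 2n/(√n + √κ)`. -/
theorem stmt4 (κ : ℝ) (hκ : 0 ≤ κ) (m : ℕ) (hm : 1 ≤ m)
    (I : ℕ → ℕ) (hI : ∀ i, i < m → I i = 0 ∨ I i = 1)
    (hn : 1 ≤ ∑ j ∈ Finset.range m, I j) :
    ∑ i ∈ Finset.range m,
        wgt κ (∑ j ∈ Finset.range i, I j) * (I i : ℝ) /
          Real.sqrt ((max 1 (∑ j ∈ Finset.range i, I j) : ℕ) : ℝ)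
      ≤ 2 * ((∑ j ∈ Finset.range m, I j : ℕ) : ℝ) /
          (Real.sqrt ((∑ j ∈ Finset.range m, I j : ℕ) : ℝ) + Real.sqrt κ) := by
  rw [sum_eq κ m I hI]
  set n := ∑ j ∈ Finset.range m, I j with hndef
  have hb := Fbound κ hκ n hn
  have hpos : 0 ≤ Real.sqrt n / ((n:ℝ) + κ) := by positivity
  linarith
end

section
/- Let κ ≥ 0, let m ≥ 1 be an integer, let D be a finite nonempty index set, and for each c ∈ D let I_1^c, …, I_m^c ∈ {0,1} be indicators with counts N_i^c = ∑_{j=1}^{i−1} I_j^c and n_c = ∑_{j=1}^m I_j^c. Set S = ∑_{c∈D} n_c. If S ≥ 1, then ∑_{c∈D} ∑_{i=1}^m w_κ(N_i^c) · I_i^c / √(max{1, N_i^c}) ≤ 2·S·√|D| / (√S + √(κ·|D|)). -/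
/-- `g(x) = 2x/(√x+√κ)`, the concave majorant function. -/
noncomputable def gfun (κ x : ℝ) : ℝ := 2 * x / (Real.sqrt x + Real.sqrt κ)

/-- Strengthened per-count potential. -/
noncomputable def Hfun (κ : ℝ) (n : ℕ) : ℝ :=
  if n = 0 then 0 else gfun κ n - wgt κ n / Real.sqrt n

lemma wgt_nonneg {κ : ℝ} (hκ : 0 ≤ κ) (n : ℕ) : 0 ≤ wgt κ n := by
  unfold wgt
  split
  · norm_num
  · positivity

lemma wgt_eq {κ : ℝ} (hκ : 0 ≤ κ) {n : ℕ} (hn : 1 ≤ n) : wgt κ n = n / (n + κ) := by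
  unfold wgt
  split
  · next h =>
    subst h
    rw [add_zero, div_self]
    have : (1:ℝ) ≤ (n:ℝ) := by exact_mod_cast hn
    positivity
  · rfl

lemma key_s5 {κ : ℝ} (hκ : 0 ≤ κ) {n : ℕ} (hn : 1 ≤ n) :
    wgt κ (n + 1) / Real.sqrt ((n:ℝ) + 1) ≤ gfun κ ((n:ℝ)+1) - gfun κ n := by
  set a := Real.sqrt n with hadef
  set b := Real.sqrt ((n:ℝ)+1) with hbdef
  set c := Real.sqrt κ with hcdef
  have hn1 : (1:ℝ) ≤ (n:ℝ) := by exact_mod_cast hn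
  have ha1 : 1 ≤ a := by rw [hadef, show (1:ℝ) = Real.sqrt 1 by simp]; exact Real.sqrt_le_sqrt hn1
  have ha2 : a^2 = n := Real.sq_sqrt (by linarith)
  have hb2 : b^2 = (n:ℝ)+1 := Real.sq_sqrt (by linarith)
  have hc0 : 0 ≤ c := Real.sqrt_nonneg κ
  have hc2 : c^2 = κ := Real.sq_sqrt hκ
  have hab : a ≤ b := Real.sqrt_le_sqrt (by linarith)
  have hbb : b^2 = a^2 + 1 := by rw [hb2, ha2]
  have hb1 : 1 ≤ b := le_trans ha1 hab
  have hbpos : 0 < b := by linarith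
  have hbc : 0 < b + c := by linarith
  have hac : 0 < a + c := by linarith
  have hbc2 : 0 < b^2 + c^2 := by nlinarith
  -- rewrite wgt and gfun
  have hw : wgt κ (n+1) = b^2 / (b^2 + c^2) := by
    rw [wgt_eq hκ (Nat.le_add_left 1 n), hb2, hc2]; push_cast; ring_nf
  have hg1 : gfun κ ((n:ℝ)+1) = 2*b^2/(b+c) := by rw [gfun, ← hbdef, ← hcdef, hb2]
  have hg0 : gfun κ (n:ℝ) = 2*a^2/(a+c) := by rw [gfun, ← hadef, ← hcdef, ha2]
  rw [hw, hg1, hg0]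
  have hlhs : b^2 / (b^2+c^2) / b = b / (b^2+c^2) := by
    field_simp
  rw [hlhs, div_sub_div _ _ (ne_of_gt hbc) (ne_of_gt hac), div_le_div_iff₀ hbc2 (by positivity)]
  -- polynomial inequality
  set W : ℝ := c^2 + a*c + 2*a^2 + 2*a^2*c^2 + 2*a^4 with hWdef
  set R : ℝ := a + c + a*c^2 + a^3 + 2*c^3 with hRdef
  have hWnn : 0 ≤ W := by positivity
  have hRnn : 0 ≤ R := by positivity
  have hW2a : W ≤ 2*a*R := by
    have h1 : 0 ≤ c*(a + 4*a*c^2 - c) := by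
      apply mul_nonneg hc0
      nlinarith [sq_nonneg (2*c-1), mul_nonneg (by linarith : (0:ℝ) ≤ a - 1) (sq_nonneg c)]
    have hring : 2*a*R - W - c*(a + 4*a*c^2 - c) = 0 := by rw [hWdef, hRdef]; ring
    linarith
  have hWab : W ≤ R*(a+b) := by
    have h2 : 0 ≤ R*(b-a) := mul_nonneg hRnn (by linarith)
    have hring : R*(a+b) - 2*a*R - R*(b-a) = 0 := by ring
    linarith
  have h5 : (b-a)*W ≤ (b-a)*(R*(a+b)) :=
    mul_le_mul_of_nonneg_left hWab (by linarith)
  have h6 : (b-a)*(R*(a+b)) = R := by linear_combination R * hbb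
  have h7 : b*W - a*W ≤ R := by
    have hring : b*W - a*W - (b-a)*W = 0 := by ring
    linarith [h5, h6.symm.le, h6.le]
  have hexp : (2*b^2*(a+c) - 2*a^2*(b+c))*(b^2+c^2) - b*((b+c)*(a+c))
      = (a*W + R - b*W)
        + (c + 2*c^3 + 2*b^2*c + a + 2*a*c^2 + 2*a*b^2 - 2*a^2*b + 2*a^3)*(b^2 - (a^2+1)) := by
    rw [hWdef, hRdef]; ring
  have hz : b^2 - (a^2+1) = 0 := by linarith
  rw [hz, mul_zero, add_zero] at hexp
  linarith

lemma Hfun_le_gfun {κ : ℝ} (hκ : 0 ≤ κ) (n : ℕ) : Hfun κ n ≤ gfun κ n := by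
  unfold Hfun
  split
  · next h => subst h; simp [gfun]
  · have h1 : 0 ≤ wgt κ n / Real.sqrt n :=
      div_nonneg (wgt_nonneg hκ n) (Real.sqrt_nonneg _)
    linarith

lemma step {κ : ℝ} (hκ : 0 ≤ κ) (n : ℕ) :
    wgt κ n / Real.sqrt ((max 1 n : ℕ) : ℝ) + Hfun κ n ≤ Hfun κ (n+1) := by
  rcases Nat.eq_zero_or_pos n with h0 | hpos
  · subst h0
    have hmax : ((max 1 0 : ℕ) : ℝ) = 1 := by norm_num
    rw [hmax, Real.sqrt_one, div_one]
    have hH0 : Hfun κ 0 = 0 := by simp [Hfun]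
    have hH1 : Hfun κ 1 = gfun κ 1 - wgt κ 1 := by
      simp [Hfun, Real.sqrt_one]
    rw [hH0, hH1, add_zero]
    have hg1 : gfun κ 1 = 2 / (1 + Real.sqrt κ) := by
      rw [gfun, Real.sqrt_one]; ring_nf
    have hc0 : 0 ≤ Real.sqrt κ := Real.sqrt_nonneg κ
    have hc2 : Real.sqrt κ ^ 2 = κ := Real.sq_sqrt hκ
    unfold wgt
    split
    · next h =>
      subst h
      simp only [Real.sqrt_zero] at hg1
      rw [hg1]; norm_num
    · next h =>
      have hκpos : 0 < κ := lt_of_le_of_ne hκ (Ne.symm h)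
      rw [hg1]
      push_cast
      have h1 : (1:ℝ)/(1+κ) ≤ 2/(1+Real.sqrt κ) := by
        rw [div_le_div_iff₀ (by linarith) (by positivity)]
        nlinarith [sq_nonneg (Real.sqrt κ - 1)]
      have h2 : (0:ℝ)/(0+κ) = 0 := by simp
      rw [h2]
      linarith
  · have hmax : ((max 1 n : ℕ) : ℝ) = (n : ℝ) := by
      rw [max_eq_right hpos]
    rw [hmax]
    have hH : Hfun κ n = gfun κ n - wgt κ n / Real.sqrt n := by
      rw [Hfun, if_neg (by omega)]
    have hH1 : Hfun κ (n+1) = gfun κ ((n:ℝ)+1) - wgt κ (n+1) / Real.sqrt ((n:ℝ)+1) := by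
      rw [Hfun, if_neg (by omega)]
      push_cast
      ring_nf
    rw [hH, hH1]
    have := key_s5 hκ hpos
    linarith

lemma per_c {κ : ℝ} (hκ : 0 ≤ κ) (m : ℕ) (a : ℕ → ℕ)
    (ha : ∀ i, i < m → a i = 0 ∨ a i = 1) :
    ∑ i ∈ Finset.range m,
        wgt κ (∑ j ∈ Finset.range i, a j) * (a i : ℝ) /
          Real.sqrt ((max 1 (∑ j ∈ Finset.range i, a j) : ℕ) : ℝ)
      ≤ gfun κ ((∑ j ∈ Finset.range m, a j : ℕ) : ℝ) := by
  have main : ∑ i ∈ Finset.range m,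
        wgt κ (∑ j ∈ Finset.range i, a j) * (a i : ℝ) /
          Real.sqrt ((max 1 (∑ j ∈ Finset.range i, a j) : ℕ) : ℝ)
      ≤ Hfun κ (∑ j ∈ Finset.range m, a j) := by
    induction m with
    | zero => simp [Hfun]
    | succ M ih =>
      have ih' := ih (fun i hi => ha i (by omega))
      rw [Finset.sum_range_succ, Finset.sum_range_succ (f := a)]
      rcases ha M (by omega) with h0 | h1
      · simp only [h0, Nat.cast_zero, mul_zero, zero_div, add_zero]
        exact ih'
      · simp only [h1, Nat.cast_one, mul_one]
        have hstep := step hκ (∑ j ∈ Finset.range M, a j)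
        linarith
  calc _ ≤ Hfun κ (∑ j ∈ Finset.range m, a j) := main
    _ ≤ _ := Hfun_le_gfun hκ _

lemma tangent {κ : ℝ} (hκ : 0 ≤ κ) {x x₀ : ℝ} (hx : 0 ≤ x) (hx₀ : 0 < x₀) :
    gfun κ x ≤ gfun κ x₀ +
      ((Real.sqrt x₀ + 2*Real.sqrt κ)/(Real.sqrt x₀ + Real.sqrt κ)^2) * (x - x₀) := by
  set s := Real.sqrt x with hsdef
  set t := Real.sqrt x₀ with htdef
  set c := Real.sqrt κ with hcdef
  have hs0 : 0 ≤ s := Real.sqrt_nonneg x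
  have hc0 : 0 ≤ c := Real.sqrt_nonneg κ
  have ht0 : 0 < t := Real.sqrt_pos.mpr hx₀
  have hs2 : s^2 = x := Real.sq_sqrt hx
  have ht2 : t^2 = x₀ := Real.sq_sqrt hx₀.le
  have hgx : gfun κ x = 2*s^2/(s+c) := by rw [gfun, ← hsdef, ← hcdef, hs2]
  have hgx0 : gfun κ x₀ = 2*t^2/(t+c) := by rw [gfun, ← htdef, ← hcdef, ht2]
  rw [hgx, hgx0, ← hs2, ← ht2]
  rcases eq_or_lt_of_le (by positivity : (0:ℝ) ≤ s + c) with hsc | hsc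
  · -- s + c = 0, so s = 0 and c = 0
    have hs : s = 0 := by linarith
    have hc : c = 0 := by linarith
    rw [hs, hc]
    have : (2:ℝ)*0^2/(0+0) = 0 := by norm_num
    rw [this]
    have h2 : 2*t^2/(t+0) + (t + 2*0)/(t+0)^2 * (0^2 - t^2) = t := by
      field_simp; ring
    rw [h2]
    exact ht0.le
  · have hden : (0:ℝ) < (t+c)^2 := by positivity
    have hpoly : 2*s^2*(t+c)^2 ≤ (2*t^2*(t+c) + (t+2*c)*(s^2-t^2))*(s+c) := by
      have hQ : (2*t^2*(t+c) + (t+2*c)*(s^2-t^2))*(s+c) - 2*s^2*(t+c)^2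
          = (t-s)^2*(s*t + 2*s*c + t*c) := by ring
      nlinarith [mul_nonneg (sq_nonneg (t-s)) (by positivity : (0:ℝ) ≤ s*t + 2*s*c + t*c)]
    have hrhs : 2*t^2/(t+c) + (t + 2*c)/(t+c)^2 * (s^2 - t^2)
        = (2*t^2*(t+c) + (t+2*c)*(s^2-t^2))/(t+c)^2 := by
      field_simp
    rw [hrhs, div_le_div_iff₀ hsc hden] at *
    · linarith [hpoly]

/-- for a finite nonempty index set `D`, indicators `I_i^c ∈ {0,1}` with
counts `N_i^c = ∑_{j<i} I_j^c`, per-coordinate totals `n_c = ∑_j I_j^c` and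
`S = ∑_c n_c ≥ 1`, we have
`∑_c ∑_i w_κ(N_i^c) I_i^c / √(max{1,N_i^c}) ≤ 2 S √|D| / (√S + √(κ|D|))`. -/
theorem stmt5 {ι : Type*} [Fintype ι] [Nonempty ι] (κ : ℝ) (hκ : 0 ≤ κ)
    (m : ℕ) (hm : 1 ≤ m)
    (I : ι → ℕ → ℕ) (hI : ∀ c i, i < m → I c i = 0 ∨ I c i = 1)
    (hS : 1 ≤ ∑ c : ι, ∑ j ∈ Finset.range m, I c j) :
    ∑ c : ι, ∑ i ∈ Finset.range m,
        wgt κ (∑ j ∈ Finset.range i, I c j) * (I c i : ℝ) /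
          Real.sqrt ((max 1 (∑ j ∈ Finset.range i, I c j) : ℕ) : ℝ)
      ≤ 2 * ((∑ c : ι, ∑ j ∈ Finset.range m, I c j : ℕ) : ℝ) *
            Real.sqrt (Fintype.card ι) /
          (Real.sqrt ((∑ c : ι, ∑ j ∈ Finset.range m, I c j : ℕ) : ℝ) +
            Real.sqrt (κ * Fintype.card ι)) := by
  set S : ℕ := ∑ c : ι, ∑ j ∈ Finset.range m, I c j with hSdef
  set D : ℕ := Fintype.card ι with hDdef
  have hD : 0 < D := Fintype.card_pos
  have hDR : (0:ℝ) < (D:ℝ) := by exact_mod_cast hD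
  have hSR : (1:ℝ) ≤ (S:ℝ) := by exact_mod_cast hS
  set x₀ : ℝ := (S:ℝ)/(D:ℝ) with hx₀def
  have hx₀ : 0 < x₀ := by positivity
  set B : ℝ := (Real.sqrt x₀ + 2*Real.sqrt κ)/(Real.sqrt x₀ + Real.sqrt κ)^2 with hBdef
  have step1 : ∑ c : ι, ∑ i ∈ Finset.range m,
        wgt κ (∑ j ∈ Finset.range i, I c j) * (I c i : ℝ) /
          Real.sqrt ((max 1 (∑ j ∈ Finset.range i, I c j) : ℕ) : ℝ)
      ≤ ∑ c : ι, gfun κ ((∑ j ∈ Finset.range m, I c j : ℕ) : ℝ) :=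
    Finset.sum_le_sum fun c _ => per_c hκ m (I c) (fun i hi => hI c i hi)
  have step2 : ∑ c : ι, gfun κ ((∑ j ∈ Finset.range m, I c j : ℕ) : ℝ)
      ≤ ∑ c : ι, (gfun κ x₀ + B * (((∑ j ∈ Finset.range m, I c j : ℕ):ℝ) - x₀)) :=
    Finset.sum_le_sum fun c _ => tangent hκ (Nat.cast_nonneg _) hx₀
  have step3 : ∑ c : ι, (gfun κ x₀ + B * (((∑ j ∈ Finset.range m, I c j : ℕ):ℝ) - x₀))
      = (D:ℝ) * gfun κ x₀ := by
    rw [Finset.sum_add_distrib, Finset.sum_const, ← Finset.mul_sum]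
    have hsum : ∑ c : ι, (((∑ j ∈ Finset.range m, I c j : ℕ):ℝ) - x₀)
        = (S:ℝ) - (D:ℝ)*x₀ := by
      rw [Finset.sum_sub_distrib, Finset.sum_const, Finset.card_univ]
      push_cast [hSdef]
      ring
    rw [hsum]
    have : (S:ℝ) - (D:ℝ)*x₀ = 0 := by
      rw [hx₀def]; field_simp; ring
    rw [this, mul_zero, add_zero, nsmul_eq_mul, Finset.card_univ]
  have hsd : Real.sqrt x₀ = Real.sqrt S / Real.sqrt D := by
    rw [hx₀def, Real.sqrt_div (Nat.cast_nonneg _)]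
  have hκD : Real.sqrt (κ * D) = Real.sqrt κ * Real.sqrt D := Real.sqrt_mul hκ _
  have hsqD : (0:ℝ) < Real.sqrt D := Real.sqrt_pos.mpr hDR
  have hsqS : (0:ℝ) < Real.sqrt S := Real.sqrt_pos.mpr (by linarith)
  have hD2 : Real.sqrt D * Real.sqrt D = (D:ℝ) := Real.mul_self_sqrt (Nat.cast_nonneg _)
  have step4 : (D:ℝ) * gfun κ x₀
      = 2 * (S:ℝ) * Real.sqrt D / (Real.sqrt S + Real.sqrt (κ * D)) := by
    rw [gfun, hsd, hκD, hx₀def]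
    have hden1 : Real.sqrt S / Real.sqrt D + Real.sqrt κ > 0 := by positivity
    have hden2 : Real.sqrt S + Real.sqrt κ * Real.sqrt D > 0 := by positivity
    field_simp
  calc _ ≤ ∑ c : ι, gfun κ ((∑ j ∈ Finset.range m, I c j : ℕ) : ℝ) := step1
    _ ≤ _ := step2
    _ = (D:ℝ) * gfun κ x₀ := step3
    _ = _ := step4
end

section
/- Let S ⊆ ℝ^K be a nonempty compact convex set, let z₁ ∈ S, let b > 0, and let g_1, …, g_m ∈ ℝ^K satisfy 0 ≤ ⟨g_i, z⟩ ≤ 1 for every z ∈ S and every i ∈ [m]. Then inf_{u ∈ S_b} ∑_{i=1}^m ⟨g_i, u⟩ ≤ min_{z ∈ S} ∑_{i=1}^m ⟨g_i, z⟩ + b·m. -/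
open scoped RealInnerProductSpace

/-- The Minkowski function of `S` based at `z₁`:
`π_{z₁}(y) = inf{λ > 0 : z₁ + λ⁻¹ (y − z₁) ∈ S}`. -/
noncomputable def mink {K : ℕ} (S : Set (EuclideanSpace ℝ (Fin K)))
    (z₁ y : EuclideanSpace ℝ (Fin K)) : ℝ :=
  sInf {l : ℝ | 0 < l ∧ z₁ + l⁻¹ • (y - z₁) ∈ S}

/-- for a nonempty compact convex `S ⊆ ℝ^K`, `z₁ ∈ S`, `b > 0`, and
`g_1,…,g_m` with `0 ≤ ⟨g_i, z⟩ ≤ 1` on `S`, the infimum of `∑_i ⟨g_i, u⟩` over the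
`b`-restricted set `S_b = {y : π_{z₁}(y) ≤ 1/(1+b)}` is at most the minimum of
`∑_i ⟨g_i, z⟩` over `S` plus `b·m`. -/
theorem stmt11 {K m : ℕ} (S : Set (EuclideanSpace ℝ (Fin K)))
    (hne : S.Nonempty) (hcomp : IsCompact S) (hconv : Convex ℝ S)
    (z₁ : EuclideanSpace ℝ (Fin K)) (hz₁ : z₁ ∈ S) (b : ℝ) (hb : 0 < b)
    (g : Fin m → EuclideanSpace ℝ (Fin K))
    (hg : ∀ i, ∀ z ∈ S, 0 ≤ ⟪g i, z⟫ ∧ ⟪g i, z⟫ ≤ 1) :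
    sInf ((fun u => ∑ i, ⟪g i, u⟫) '' {y | mink S z₁ y ≤ 1 / (1 + b)})
      ≤ sInf ((fun z => ∑ i, ⟪g i, z⟫) '' S) + b * m := by
  set f : EuclideanSpace ℝ (Fin K) → ℝ := fun u => ∑ i, ⟪g i, u⟫ with hf
  have hcont : Continuous f := by
    apply continuous_finset_sum
    intro i _
    exact continuous_const.inner continuous_id
  have hS0 : ∀ z ∈ S, 0 ≤ f z := fun z hz =>
    Finset.sum_nonneg fun i _ => (hg i z hz).1
  have hSm : ∀ z ∈ S, f z ≤ m := by
    intro z hz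
    calc f z ≤ ∑ _i : Fin m, (1 : ℝ) := Finset.sum_le_sum fun i _ => (hg i z hz).2
    _ = m := by simp
  have hbm : (0:ℝ) ≤ b * m := by positivity
  have hrhs0 : (0:ℝ) ≤ sInf (f '' S) := by
    apply le_csInf (hne.image f)
    rintro y ⟨w, hw, rfl⟩
    exact hS0 w hw
  by_cases hbd : BddBelow (f '' {y | mink S z₁ y ≤ 1 / (1 + b)})
  · obtain ⟨z, hzS, hzmin⟩ := hcomp.exists_isMinOn hne hcont.continuousOn
    set c : ℝ := 1 / (1 + b) with hc
    have hc0 : 0 < c := by positivity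
    set u := z₁ + c • (z - z₁) with hu
    have hmem : mink S z₁ u ≤ c := by
      apply csInf_le ⟨0, fun l hl => hl.1.le⟩
      refine ⟨hc0, ?_⟩
      have h1 : c⁻¹ • (u - z₁) = z - z₁ := by
        rw [hu]
        rw [add_sub_cancel_left, smul_smul, inv_mul_cancel₀ hc0.ne', one_smul]
      rw [h1]
      simpa using hzS
    have huin : f u ∈ f '' {y | mink S z₁ y ≤ 1 / (1 + b)} := ⟨u, hmem, rfl⟩
    have h1 : sInf (f '' {y | mink S z₁ y ≤ 1 / (1 + b)}) ≤ f u := csInf_le hbd huin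
    have hfu : f u = f z₁ + c * (f z - f z₁) := by
      simp only [hf, hu, inner_add_right, real_inner_smul_right, inner_sub_right,
        Finset.sum_add_distrib, Finset.sum_sub_distrib, ← Finset.mul_sum]
    have hb1 : (0:ℝ) < 1 + b := by linarith
    have hfuz : f u ≤ f z + b * m := by
      rw [hfu, hc]
      have h2 : f z₁ ≤ m := hSm z₁ hz₁
      have h3 : 0 ≤ f z := hS0 z hzS
      have h4 : 1 - 1/(1+b) = b/(1+b) := by field_simp; ring
      have h5 : b/(1+b) ≤ b := by
        rw [div_le_iff₀ hb1]; nlinarith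
      nlinarith [mul_nonneg hb.le (sub_nonneg.mpr h2), div_nonneg hb.le hb1.le,
        mul_le_mul_of_nonneg_left h2 (div_nonneg hb.le hb1.le)]
    have hzle : f z ≤ sInf (f '' S) := by
      apply le_csInf (hne.image f)
      rintro y ⟨w, hw, rfl⟩
      exact hzmin hw
    linarith
  · rw [Real.sInf_of_not_bddBelow hbd]
    linarith
end
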